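/- If u is a smooth, decaying solution of ∂ₜu + ∂ₓₓₓu = ∂ₓ(u³) and Iu = xu + 3t∫_{−∞}^x ∂ₜu dx', then Iu satisfies (∂ₜ + ∂ₓ³)(Iu) = 3u²(Iu)ₓ. -/

import Mathlib

open MeasureTheory

noncomputable def Dt (f : ℝ × ℝ → ℝ) : ℝ × ℝ → ℝ := fun p => fderiv ℝ f p (1, 0)
noncomputable def Dx (f : ℝ × ℝ → ℝ) : ℝ × ℝ → ℝ := fun p => fderiv ℝ f p (0, 1)

lemma smooth_app {f : ℝ × ℝ → ℝ} (hf : ContDiff ℝ (⊤ : ℕ∞) f) (v : ℝ × ℝ) :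
    ContDiff ℝ (⊤ : ℕ∞) (fun p => fderiv ℝ f p v) :=
  ((ContinuousLinearMap.apply ℝ ℝ v).contDiff).comp (hf.fderiv_right (by simp))

lemma smooth_Dt {f : ℝ × ℝ → ℝ} (hf : ContDiff ℝ (⊤ : ℕ∞) f) : ContDiff ℝ (⊤ : ℕ∞) (Dt f) := smooth_app hf _
lemma smooth_Dx {f : ℝ × ℝ → ℝ} (hf : ContDiff ℝ (⊤ : ℕ∞) f) : ContDiff ℝ (⊤ : ℕ∞) (Dx f) := smooth_app hf _

lemma deriv_x {f : ℝ × ℝ → ℝ} (hf : ContDiff ℝ (⊤ : ℕ∞) f) (t x : ℝ) :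
    deriv (fun y => f (t, y)) x = Dx f (t, x) := by
  have h1 : HasDerivAt (fun y : ℝ => ((t, y) : ℝ × ℝ)) (0, 1) x :=
    (hasDerivAt_const x t).prodMk (hasDerivAt_id x)
  have h2 : HasFDerivAt f (fderiv ℝ f (t, x)) (t, x) :=
    (hf.differentiable (by simp) (t, x)).hasFDerivAt
  exact (h2.comp_hasDerivAt x h1).deriv

lemma deriv_t {f : ℝ × ℝ → ℝ} (hf : ContDiff ℝ (⊤ : ℕ∞) f) (t x : ℝ) :
    deriv (fun s => f (s, x)) t = Dt f (t, x) := by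
  have h1 : HasDerivAt (fun s : ℝ => ((s, x) : ℝ × ℝ)) (1, 0) t :=
    (hasDerivAt_id t).prodMk (hasDerivAt_const t x)
  have h2 : HasFDerivAt f (fderiv ℝ f (t, x)) (t, x) :=
    (hf.differentiable (by simp) (t, x)).hasFDerivAt
  exact (h2.comp_hasDerivAt t h1).deriv

lemma swapDD {f : ℝ × ℝ → ℝ} (hf : ContDiff ℝ (⊤ : ℕ∞) f) : Dt (Dx f) = Dx (Dt f) := by
  funext p
  have hd : DifferentiableAt ℝ (fderiv ℝ f) p :=
    ((hf.fderiv_right (m := (⊤ : ℕ∞)) (by simp)).differentiable (by simp)) p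
  have hsym := (hf.contDiffAt (x := p)).isSymmSndFDerivAt (by rw [minSmoothness_of_isRCLikeNormedField]; exact WithTop.coe_le_coe.mpr le_top)
  have key : ∀ v : ℝ × ℝ, fderiv ℝ (fun q => fderiv ℝ f q v) p
      = (fderiv ℝ (fderiv ℝ f) p).flip v := by
    intro v
    have h := fderiv_clm_apply hd (differentiableAt_const v)
    simpa using h
  have e1 : Dt (Dx f) p = fderiv ℝ (fderiv ℝ f) p (1, 0) (0, 1) := by
    show fderiv ℝ (fun q => fderiv ℝ f q (0, 1)) p (1, 0) = _
    rw [key]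
    simp
  have e2 : Dx (Dt f) p = fderiv ℝ (fderiv ℝ f) p (0, 1) (1, 0) := by
    show fderiv ℝ (fun q => fderiv ℝ f q (1, 0)) p (0, 1) = _
    rw [key]
    simp
  rw [e1, e2, hsym (1, 0) (0, 1)]

section alg

variable {f g : ℝ × ℝ → ℝ}

lemma Dx_add (hf : ContDiff ℝ (⊤ : ℕ∞) f) (hg : ContDiff ℝ (⊤ : ℕ∞) g) :
    Dx (fun p => f p + g p) = fun p => Dx f p + Dx g p := by
  funext p
  show fderiv ℝ (fun q => f q + g q) p (0, 1) = _
  rw [fderiv_fun_add (hf.differentiable (by simp) p) (hg.differentiable (by simp) p)]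
  simp [Dx]

lemma Dt_add (hf : ContDiff ℝ (⊤ : ℕ∞) f) (hg : ContDiff ℝ (⊤ : ℕ∞) g) :
    Dt (fun p => f p + g p) = fun p => Dt f p + Dt g p := by
  funext p
  show fderiv ℝ (fun q => f q + g q) p (1, 0) = _
  rw [fderiv_fun_add (hf.differentiable (by simp) p) (hg.differentiable (by simp) p)]
  simp [Dt]

lemma Dx_sub (hf : ContDiff ℝ (⊤ : ℕ∞) f) (hg : ContDiff ℝ (⊤ : ℕ∞) g) :
    Dx (fun p => f p - g p) = fun p => Dx f p - Dx g p := by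
  funext p
  show fderiv ℝ (fun q => f q - g q) p (0, 1) = _
  rw [fderiv_fun_sub (hf.differentiable (by simp) p) (hg.differentiable (by simp) p)]
  simp [Dx]

lemma Dt_sub (hf : ContDiff ℝ (⊤ : ℕ∞) f) (hg : ContDiff ℝ (⊤ : ℕ∞) g) :
    Dt (fun p => f p - g p) = fun p => Dt f p - Dt g p := by
  funext p
  show fderiv ℝ (fun q => f q - g q) p (1, 0) = _
  rw [fderiv_fun_sub (hf.differentiable (by simp) p) (hg.differentiable (by simp) p)]
  simp [Dt]

lemma Dx_mul (hf : ContDiff ℝ (⊤ : ℕ∞) f) (hg : ContDiff ℝ (⊤ : ℕ∞) g) :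
    Dx (fun p => f p * g p) = fun p => f p * Dx g p + g p * Dx f p := by
  funext p
  show fderiv ℝ (fun q => f q * g q) p (0, 1) = _
  rw [fderiv_fun_mul (hf.differentiable (by simp) p) (hg.differentiable (by simp) p)]
  simp [Dx]

lemma Dt_mul (hf : ContDiff ℝ (⊤ : ℕ∞) f) (hg : ContDiff ℝ (⊤ : ℕ∞) g) :
    Dt (fun p => f p * g p) = fun p => f p * Dt g p + g p * Dt f p := by
  funext p
  show fderiv ℝ (fun q => f q * g q) p (1, 0) = _
  rw [fderiv_fun_mul (hf.differentiable (by simp) p) (hg.differentiable (by simp) p)]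
  simp [Dt]

lemma Dx_cmul (c : ℝ) (hf : ContDiff ℝ (⊤ : ℕ∞) f) :
    Dx (fun p => c * f p) = fun p => c * Dx f p := by
  funext p
  show fderiv ℝ (fun q => c * f q) p (0, 1) = _
  rw [fderiv_const_mul (hf.differentiable (by simp) p) c]
  simp [Dx]

lemma Dx_snd : Dx (fun p : ℝ × ℝ => p.2) = fun _ => 1 := by
  funext p
  show fderiv ℝ (fun p : ℝ × ℝ => p.2) p (0, 1) = 1
  rw [fderiv_snd]
  simp

lemma Dt_snd : Dt (fun p : ℝ × ℝ => p.2) = fun _ => 0 := by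
  funext p
  show fderiv ℝ (fun p : ℝ × ℝ => p.2) p (1, 0) = 0
  rw [fderiv_snd]
  simp

lemma Dx_cfst : Dx (fun p : ℝ × ℝ => 3 * p.1) = fun _ => 0 := by
  funext p
  show fderiv ℝ (fun p : ℝ × ℝ => 3 * p.1) p (0, 1) = 0
  rw [fderiv_const_mul differentiableAt_fst 3, fderiv_fst]
  simp

lemma Dt_cfst : Dt (fun p : ℝ × ℝ => 3 * p.1) = fun _ => 3 := by
  funext p
  show fderiv ℝ (fun p : ℝ × ℝ => 3 * p.1) p (1, 0) = 3
  rw [fderiv_const_mul differentiableAt_fst 3, fderiv_fst]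
  simp

end alg

noncomputable def Pf (U : ℝ × ℝ → ℝ) : ℝ × ℝ → ℝ := fun q => U q ^ 3 - Dx (Dx U) q
noncomputable def Gf (U : ℝ × ℝ → ℝ) : ℝ × ℝ → ℝ := fun q => q.2 * U q + 3 * q.1 * Pf U q

theorem core (U : ℝ × ℝ → ℝ) (hU : ContDiff ℝ (⊤ : ℕ∞) U)
    (heq : ∀ p, Dt U p + Dx (Dx (Dx U)) p = Dx (fun q => U q ^ 3) p) :
    ∀ p : ℝ × ℝ, Dt (Gf U) p + Dx (Dx (Dx (Gf U))) p = 3 * U p ^ 2 * Dx (Gf U) p := by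
  have hU1 : ContDiff ℝ (⊤ : ℕ∞) (Dx U) := smooth_Dx hU
  have hU2 : ContDiff ℝ (⊤ : ℕ∞) (Dx (Dx U)) := smooth_Dx hU1
  have hT : ContDiff ℝ (⊤ : ℕ∞) (Dt U) := smooth_Dt hU
  have hV : ContDiff ℝ (⊤ : ℕ∞) (fun q => U q ^ 3) := hU.pow 3
  have hPs : ContDiff ℝ (⊤ : ℕ∞) (Pf U) := by
    unfold Pf; exact hV.sub hU2
  have eV : (fun q => U q ^ 3) = fun q => U q * (U q * U q) := by funext q; ring
  have hDxV : Dx (fun q => U q ^ 3) = fun p => 3 * U p ^ 2 * Dx U p := by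
    rw [eV, Dx_mul hU (hU.mul hU), Dx_mul hU hU]
    funext p; dsimp only; ring
  have hDtV : Dt (fun q => U q ^ 3) = fun p => 3 * U p ^ 2 * Dt U p := by
    rw [eV, Dt_mul hU (hU.mul hU), Dt_mul hU hU]
    funext p; dsimp only; ring
  have hT_eq : Dt U = fun p => 3 * U p ^ 2 * Dx U p - Dx (Dx (Dx U)) p := by
    funext p
    have h := heq p
    rw [hDxV] at h
    dsimp only at h ⊢
    linarith
  have hDxP : Dx (Pf U) = Dt U := by
    unfold Pf
    rw [Dx_sub hV hU2, hDxV]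
    funext p
    rw [hT_eq]
  have sw2 : Dt (Dx (Dx U)) = Dx (Dx (Dt U)) := by
    rw [swapDD hU1, swapDD hU]
  have hDtP : Dt (Pf U) = fun p => 3 * U p ^ 2 * Dt U p - Dx (Dx (Dt U)) p := by
    unfold Pf
    rw [Dt_sub hV hU2, hDtV, sw2]
  have hDxG : Dx (Gf U) = fun p => U p + p.2 * Dx U p + 3 * p.1 * Dt U p := by
    unfold Gf
    rw [Dx_add (contDiff_snd.mul hU) ((contDiff_const.mul contDiff_fst).mul hPs),
      Dx_mul contDiff_snd hU,
      Dx_mul (contDiff_const.mul contDiff_fst) hPs,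
      hDxP, Dx_snd, Dx_cfst]
    funext p; dsimp only; ring
  have hDx2G : Dx (Dx (Gf U))
      = fun p => 2 * Dx U p + p.2 * Dx (Dx U) p + 3 * p.1 * Dx (Dt U) p := by
    rw [hDxG,
      Dx_add (hU.add (contDiff_snd.mul hU1)) ((contDiff_const.mul contDiff_fst).mul hT),
      Dx_add hU (contDiff_snd.mul hU1),
      Dx_mul contDiff_snd hU1,
      Dx_mul (contDiff_const.mul contDiff_fst) hT,
      Dx_snd, Dx_cfst]
    funext p; dsimp only; ring
  have hDx3G : Dx (Dx (Dx (Gf U)))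
      = fun p => 3 * Dx (Dx U) p + p.2 * Dx (Dx (Dx U)) p + 3 * p.1 * Dx (Dx (Dt U)) p := by
    rw [hDx2G,
      Dx_add ((contDiff_const.mul hU1).add (contDiff_snd.mul hU2))
        ((contDiff_const.mul contDiff_fst).mul (smooth_Dx hT)),
      Dx_add (contDiff_const.mul hU1) (contDiff_snd.mul hU2),
      Dx_cmul 2 hU1,
      Dx_mul contDiff_snd hU2,
      Dx_mul (contDiff_const.mul contDiff_fst) (smooth_Dx hT),
      Dx_snd, Dx_cfst]
    funext p; dsimp only; ring
  have hDtG : Dt (Gf U) = fun p => p.2 * Dt U p + 3 * Pf U p + 3 * p.1 * Dt (Pf U) p := by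
    unfold Gf
    rw [Dt_add (contDiff_snd.mul hU) ((contDiff_const.mul contDiff_fst).mul hPs),
      Dt_mul contDiff_snd hU,
      Dt_mul (contDiff_const.mul contDiff_fst) hPs,
      Dt_snd, Dt_cfst]
    funext p; dsimp only; ring
  intro p
  rw [hDtG, hDx3G, hDxG, hDtP]
  simp only [Pf]
  have h := congrFun hT_eq p
  rw [h]
  ring

/-- If `u` is a smooth, decaying solution of mKdV and
`Iu = xu + 3t∫_{−∞}^x ∂ₜu dx'`, then `(∂ₜ + ∂ₓ³)(Iu) = 3u²(Iu)ₓ`.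
The decay hypothesis is expressed by the identity
`∫_{−∞}^x ∂ₜu dx' = u³ − u_{xx}`, valid for decaying solutions. -/
theorem I_equation (u : ℝ → ℝ → ℝ)
    (hu : ContDiff ℝ (⊤ : ℕ∞) (fun p : ℝ × ℝ => u p.1 p.2))
    (heq : ∀ t x : ℝ,
      deriv (fun s : ℝ => u s x) t + deriv (deriv (deriv (u t))) x
        = deriv (fun y : ℝ => (u t y) ^ 3) x)
    (Iu : ℝ → ℝ → ℝ)
    (hIu : ∀ t x : ℝ,
      Iu t x = x * u t x + 3 * t * ∫ x' in Set.Iio x, deriv (fun s : ℝ => u s x') t)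
    (hdecay : ∀ t x : ℝ,
      (∫ x' in Set.Iio x, deriv (fun s : ℝ => u s x') t)
        = (u t x) ^ 3 - deriv (deriv (u t)) x) :
    ∀ t x : ℝ,
      deriv (fun s : ℝ => Iu s x) t + deriv (deriv (deriv (Iu t))) x
        = 3 * (u t x) ^ 2 * deriv (Iu t) x := by
  have hGs : ContDiff ℝ (⊤ : ℕ∞) (Gf (fun p : ℝ × ℝ => u p.1 p.2)) := by
    unfold Gf Pf
    exact (contDiff_snd.mul hu).add ((contDiff_const.mul contDiff_fst).mul
      ((hu.pow 3).sub (smooth_Dx (smooth_Dx hu))))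
  have b1 : ∀ t, deriv (u t)
      = fun y => Dx (fun p : ℝ × ℝ => u p.1 p.2) (t, y) := by
    intro t; funext y; exact deriv_x hu t y
  have b2 : ∀ t, deriv (deriv (u t))
      = fun y => Dx (Dx (fun p : ℝ × ℝ => u p.1 p.2)) (t, y) := by
    intro t
    rw [b1 t]
    funext y
    exact deriv_x (smooth_Dx hu) t y
  have b3 : ∀ t x, deriv (deriv (deriv (u t))) x
      = Dx (Dx (Dx (fun p : ℝ × ℝ => u p.1 p.2))) (t, x) := by
    intro t x
    rw [b2 t]
    exact deriv_x (smooth_Dx (smooth_Dx hu)) t x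
  have heq' : ∀ p : ℝ × ℝ, Dt (fun p : ℝ × ℝ => u p.1 p.2) p
      + Dx (Dx (Dx (fun p : ℝ × ℝ => u p.1 p.2))) p
      = Dx (fun q => (fun p : ℝ × ℝ => u p.1 p.2) q ^ 3) p := by
    rintro ⟨t, x⟩
    have dt1 : deriv (fun s : ℝ => u s x) t = Dt (fun p : ℝ × ℝ => u p.1 p.2) (t, x) :=
      deriv_t hu t x
    have c1 : deriv (fun y : ℝ => (u t y) ^ 3) x
        = Dx (fun q => (fun p : ℝ × ℝ => u p.1 p.2) q ^ 3) (t, x) :=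
      deriv_x (hu.pow 3) t x
    have h := heq t x
    rw [dt1, c1, b3 t x] at h
    exact h
  have hIuG : ∀ s y, Iu s y = Gf (fun p : ℝ × ℝ => u p.1 p.2) (s, y) := by
    intro s y
    rw [hIu s y, hdecay s y, b2 s]
    simp only [Gf, Pf]
  intro t x
  have g1 : (fun s => Iu s x) = fun s => Gf (fun p : ℝ × ℝ => u p.1 p.2) (s, x) :=
    funext fun s => hIuG s x
  have g2 : Iu t = fun y => Gf (fun p : ℝ × ℝ => u p.1 p.2) (t, y) :=
    funext fun y => hIuG t y
  have bG1 : deriv (fun y => Gf (fun p : ℝ × ℝ => u p.1 p.2) (t, y))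
      = fun y => Dx (Gf (fun p : ℝ × ℝ => u p.1 p.2)) (t, y) :=
    funext fun y => deriv_x hGs t y
  have bG2 : deriv (fun y => Dx (Gf (fun p : ℝ × ℝ => u p.1 p.2)) (t, y))
      = fun y => Dx (Dx (Gf (fun p : ℝ × ℝ => u p.1 p.2))) (t, y) :=
    funext fun y => deriv_x (smooth_Dx hGs) t y
  rw [g1, g2, deriv_t hGs t x, bG1, bG2,
    deriv_x (smooth_Dx (smooth_Dx hGs)) t x]
  have hc := core (fun p : ℝ × ℝ => u p.1 p.2) hu heq' (t, x)
  dsimp only at hc ⊢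
  exact hc
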